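/- arXiv:1103.1433 — 3 statements merged into one kernel-verified Lean document; each statement's English description precedes it below -/
import Mathlib

section
/- Suppose N, E, S, W are binary relations on a set X and a point a satisfies the clockwise-square condition: a ∈ fix(N;S), every N-successor of a is in fix(E;W), every N;E-successor is in fix(S;N), every N;E;S-successor is in fix(W;E), and a ∈ fix(N;E;S;W). Then there exist points b, c, d with (a,b) ∈ N, (b,c) ∈ E, (c,d) ∈ S, (d,a) ∈ W; moreover (b,a) ∈ S, (c,b) ∈ W, (d,c) ∈ N. -/
def comp {X : Type*} (r s : Set (X × X)) : Set (X × X) :=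
  {z | ∃ b, (z.1, b) ∈ r ∧ (b, z.2) ∈ s}

def fix' {X : Type*} (r : Set (X × X)) : Set X :=
  {x | (∃ y, (x, y) ∈ r) ∧ ∀ y, (x, y) ∈ r → x = y}

theorem clockwise_square {X : Type*} (N E S W : Set (X × X)) (a : X)
    (h1 : a ∈ fix' (comp N S))
    (h2 : ∀ b, (a, b) ∈ N → b ∈ fix' (comp E W))
    (h3 : ∀ c, (a, c) ∈ comp N E → c ∈ fix' (comp S N))
    (h4 : ∀ d, (a, d) ∈ comp (comp N E) S → d ∈ fix' (comp W E))
    (h5 : a ∈ fix' (comp (comp (comp N E) S) W)) :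
    ∃ b c d : X, (a, b) ∈ N ∧ (b, c) ∈ E ∧ (c, d) ∈ S ∧ (d, a) ∈ W ∧
      (b, a) ∈ S ∧ (c, b) ∈ W ∧ (d, c) ∈ N := by
  obtain ⟨⟨y1, b, hab, hbS⟩, hu1⟩ := h1
  have hba : (b, a) ∈ S := by have := hu1 y1 ⟨b, hab, hbS⟩; subst this; exact hbS
  obtain ⟨⟨y2, c, hbc, hcW⟩, hu2⟩ := h2 b hab
  have hcb : (c, b) ∈ W := by have := hu2 y2 ⟨c, hbc, hcW⟩; subst this; exact hcW
  obtain ⟨⟨y3, d, hcd, hdN⟩, hu3⟩ := h3 c ⟨b, hab, hbc⟩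
  have hdc : (d, c) ∈ N := by have := hu3 y3 ⟨d, hcd, hdN⟩; subst this; exact hdN
  obtain ⟨⟨y4, e, hde, heE⟩, hu4⟩ := h4 d ⟨c, ⟨b, hab, hbc⟩, hcd⟩
  have hda : (d, a) ∈ W := by
    have := h5.2 e ⟨d, ⟨c, ⟨b, hab, hbc⟩, hcd⟩, hde⟩
    rwa [← this] at hde
  exact ⟨b, c, d, hab, hbc, hcd, hda, hba, hcb, hdc⟩
end

section
/- Let N, E be partial-function relations on a set X, let a₀ ∈ X, and suppose: (i) for every point x reachable from a₀ by a (possibly empty) sequence of N-steps followed by E-steps, both N;E and E;N are defined at x and x ∈ Tie(N;E, E;N) (i.e., N;E and E;N agree at x). Then there is a map g : ℕ × ℕ → X with g(0,0) = a₀, (g(i,j), g(i+1,j)) ∈ E and (g(i,j), g(i,j+1)) ∈ N for all i,j. -/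
def IsDet {X : Type*} (p : Set (X × X)) : Prop :=
  ∀ a b c : X, (a, b) ∈ p → (a, c) ∈ p → b = c

def Tie {X : Type*} (p q : Set (X × X)) : Set X :=
  {a | ∀ b, (a, b) ∈ p ↔ (a, b) ∈ q}

/-- reachable from a₀ by a (possibly empty) block of N-steps followed by E-steps -/
def ReachNE {X : Type*} (N E : Set (X × X)) (a₀ x : X) : Prop :=
  ∃ b, Relation.ReflTransGen (fun u w => (u, w) ∈ N) a₀ b ∧
       Relation.ReflTransGen (fun u w => (u, w) ∈ E) b x

theorem tie_forces_grid {X : Type*} (N E : Set (X × X)) (a₀ : X)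
    (hN : IsDet N) (hE : IsDet E)
    (hreach : ∀ x, ReachNE N E a₀ x →
      (∃ y, (x, y) ∈ comp N E) ∧ (∃ y, (x, y) ∈ comp E N) ∧
      x ∈ Tie (comp N E) (comp E N)) :
    ∃ g : ℕ × ℕ → X, g (0, 0) = a₀ ∧
      (∀ i j : ℕ, (g (i, j), g (i + 1, j)) ∈ E) ∧
      (∀ i j : ℕ, (g (i, j), g (i, j + 1)) ∈ N) := by
  classical
  have hNs : ∀ x, ReachNE N E a₀ x → ∃ y, (x, y) ∈ N := by
    intro x hx
    obtain ⟨⟨y, b, hb1, _⟩, _, _⟩ := hreach x hx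
    exact ⟨b, hb1⟩
  have hEs : ∀ x, ReachNE N E a₀ x → ∃ y, (x, y) ∈ E := by
    intro x hx
    obtain ⟨_, ⟨y, b, hb1, _⟩, _⟩ := hreach x hx
    exact ⟨b, hb1⟩
  set ns : X → X := fun x => if h : ReachNE N E a₀ x then (hNs x h).choose else x with hns
  set es : X → X := fun x => if h : ReachNE N E a₀ x then (hEs x h).choose else x with hes
  have ns_spec : ∀ x, ReachNE N E a₀ x → (x, ns x) ∈ N := by
    intro x hx; simp only [hns, dif_pos hx]; exact (hNs x hx).choose_spec
  have es_spec : ∀ x, ReachNE N E a₀ x → (x, es x) ∈ E := by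
    intro x hx; simp only [hes, dif_pos hx]; exact (hEs x hx).choose_spec
  -- reachability facts
  have reach_es : ∀ x, ReachNE N E a₀ x → ReachNE N E a₀ (es x) := by
    rintro x hx
    obtain ⟨b, hab, hbx⟩ := hx
    exact ⟨b, hab, hbx.tail (es_spec x ⟨b, hab, hbx⟩)⟩
  have reach_ns_col : ∀ j : ℕ, Relation.ReflTransGen (fun u w => (u, w) ∈ N) a₀ (ns^[j] a₀) := by
    intro j
    induction j with
    | zero => exact Relation.ReflTransGen.refl
    | succ j ih =>
      rw [Function.iterate_succ_apply']
      exact ih.tail (ns_spec _ ⟨_, ih, Relation.ReflTransGen.refl⟩)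
  have reach_col : ∀ j : ℕ, ReachNE N E a₀ (ns^[j] a₀) :=
    fun j => ⟨_, reach_ns_col j, Relation.ReflTransGen.refl⟩
  have reach_g : ∀ i j : ℕ, ReachNE N E a₀ (es^[i] (ns^[j] a₀)) := by
    intro i j
    induction i with
    | zero => exact reach_col j
    | succ i ih => rw [Function.iterate_succ_apply']; exact reach_es _ ih
  -- commutation lemma
  have comm : ∀ x x', ReachNE N E a₀ x → ReachNE N E a₀ x' → (x, x') ∈ N →
      (es x, es x') ∈ N := by
    intro x x' hx hx' hxx'
    obtain ⟨_, _, htie⟩ := hreach x hx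
    have h1 : (x, es x') ∈ comp N E := ⟨x', hxx', es_spec x' hx'⟩
    obtain ⟨b, hb1, hb2⟩ := (htie (es x')).mp h1
    have : b = es x := hE x b (es x) hb1 (es_spec x hx)
    rwa [this] at hb2
  refine ⟨fun p => es^[p.1] (ns^[p.2] a₀), rfl, ?_, ?_⟩
  · intro i j
    simp only
    rw [Function.iterate_succ_apply']
    exact es_spec _ (reach_g i j)
  · intro i j
    simp only
    induction i with
    | zero =>
      simp only [Function.iterate_zero_apply]
      rw [Function.iterate_succ_apply']
      exact ns_spec _ (reach_col j)
    | succ i ih =>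
      rw [Function.iterate_succ_apply', Function.iterate_succ_apply' es i]
      exact comm _ _ (reach_g i j) (reach_g i (j+1)) ih
end

section
/- Let N, E, S, W be binary relations on X such that every point of X satisfies both the clockwise square condition (fix(N;S), [N]fix(E;W), [N;E]fix(S;N), [N;E;S]fix(W;E), fix(N;E;S;W)) and the anticlockwise square condition (fix(E;W), [E]fix(N;S), [E;N]fix(W;E), [E;N;W]fix(S;N), fix(E;N;W;S)). Then for any a₀ ∈ X there is a map g : ℕ×ℕ → X with g(0,0) = a₀ and (g(i,j), g(i+1,j)) ∈ E, (g(i+1,j), g(i,j)) ∈ W, (g(i,j), g(i,j+1)) ∈ N, (g(i,j+1), g(i,j)) ∈ S for all i,j ∈ ℕ. -/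
theorem squares_force_grid {X : Type*} (N E S W : Set (X × X))
    (hcw : ∀ x : X,
      x ∈ fix' (comp N S) ∧
      (∀ y, (x, y) ∈ N → y ∈ fix' (comp E W)) ∧
      (∀ y, (x, y) ∈ comp N E → y ∈ fix' (comp S N)) ∧
      (∀ y, (x, y) ∈ comp (comp N E) S → y ∈ fix' (comp W E)) ∧
      x ∈ fix' (comp (comp (comp N E) S) W))
    (hacw : ∀ x : X,
      x ∈ fix' (comp E W) ∧
      (∀ y, (x, y) ∈ E → y ∈ fix' (comp N S)) ∧
      (∀ y, (x, y) ∈ comp E N → y ∈ fix' (comp W E)) ∧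
      (∀ y, (x, y) ∈ comp (comp E N) W → y ∈ fix' (comp S N)) ∧
      x ∈ fix' (comp (comp (comp E N) W) S)) :
    ∀ a₀ : X, ∃ g : ℕ × ℕ → X, g (0, 0) = a₀ ∧
      (∀ i j : ℕ, (g (i, j), g (i + 1, j)) ∈ E) ∧
      (∀ i j : ℕ, (g (i + 1, j), g (i, j)) ∈ W) ∧
      (∀ i j : ℕ, (g (i, j), g (i, j + 1)) ∈ N) ∧
      (∀ i j : ℕ, (g (i, j + 1), g (i, j)) ∈ S) := by
  classical
  intro a₀
  -- two-way N successor
  have exN : ∀ x : X, ∃ n, (x, n) ∈ N ∧ (n, x) ∈ S := by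
    intro x
    obtain ⟨⟨y, b, hb1, hb2⟩, hu⟩ := (hcw x).1
    have hxy := hu y ⟨b, hb1, hb2⟩
    rw [← hxy] at hb2
    exact ⟨b, hb1, hb2⟩
  -- two-way E successor
  have exE : ∀ x : X, ∃ e, (x, e) ∈ E ∧ (e, x) ∈ W := by
    intro x
    obtain ⟨⟨y, b, hb1, hb2⟩, hu⟩ := (hacw x).1
    have hxy := hu y ⟨b, hb1, hb2⟩
    rw [← hxy] at hb2
    exact ⟨b, hb1, hb2⟩
  -- corner completion
  have corner : ∀ x n e, (x, n) ∈ N → (x, e) ∈ E →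
      ∃ z, (n, z) ∈ E ∧ (z, n) ∈ W ∧ (e, z) ∈ N ∧ (z, e) ∈ S := by
    intro x n e hn he
    obtain ⟨_, h2, h3, h4, h5⟩ := hcw x
    obtain ⟨⟨y, z, hz1, hz2⟩, hu2⟩ := h2 n hn
    have hny := hu2 y ⟨z, hz1, hz2⟩
    rw [← hny] at hz2
    have hxz : (x, z) ∈ comp N E := ⟨n, hn, hz1⟩
    obtain ⟨⟨y', s, hs1, hs2⟩, hu3⟩ := h3 z hxz
    have hzy' := hu3 y' ⟨s, hs1, hs2⟩
    rw [← hzy'] at hs2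
    have hxs : (x, s) ∈ comp (comp N E) S := ⟨z, hxz, hs1⟩
    obtain ⟨⟨y'', w, hw1, hw2⟩, hu4⟩ := h4 s hxs
    have hwx : x = w := h5.2 w ⟨s, hxs, hw1⟩
    rw [← hwx] at hw1
    have hse : s = e := hu4 e ⟨x, hw1, he⟩
    rw [hse] at hs1 hs2
    exact ⟨z, hz1, hz2, hs2, hs1⟩
  -- extend a row one step north
  have nextRow : ∀ r : ℕ → X, (∀ i, (r i, r (i + 1)) ∈ E) →
      ∃ r' : ℕ → X, (∀ i, (r i, r' i) ∈ N ∧ (r' i, r i) ∈ S) ∧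
        (∀ i, (r' i, r' (i + 1)) ∈ E ∧ (r' (i + 1), r' i) ∈ W) := by
    intro r hr
    let F : ∀ i : ℕ, {y : X // (r i, y) ∈ N ∧ (y, r i) ∈ S} :=
      fun i => Nat.rec
        ⟨Classical.choose (exN (r 0)), Classical.choose_spec (exN (r 0))⟩
        (fun i ih =>
          ⟨Classical.choose (corner (r i) ih.1 (r (i + 1)) ih.2.1 (hr i)),
            (Classical.choose_spec
              (corner (r i) ih.1 (r (i + 1)) ih.2.1 (hr i))).2.2⟩) i
    refine ⟨fun i => (F i).1, fun i => (F i).2, fun i => ?_⟩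
    exact ⟨(Classical.choose_spec
        (corner (r i) (F i).1 (r (i + 1)) (F i).2.1 (hr i))).1,
      (Classical.choose_spec
        (corner (r i) (F i).1 (r (i + 1)) (F i).2.1 (hr i))).2.1⟩
  -- row 0
  let r0 : ℕ → X := fun i => Nat.rec a₀ (fun _ x => Classical.choose (exE x)) i
  have hr0 : ∀ i, (r0 i, r0 (i + 1)) ∈ E ∧ (r0 (i + 1), r0 i) ∈ W :=
    fun i => Classical.choose_spec (exE (r0 i))
  -- all rows
  let R : ∀ _ : ℕ, {r : ℕ → X // ∀ i, (r i, r (i + 1)) ∈ E ∧ (r (i + 1), r i) ∈ W} :=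
    fun j => Nat.rec ⟨r0, hr0⟩
      (fun j ih =>
        ⟨Classical.choose (nextRow ih.1 (fun i => (ih.2 i).1)),
          (Classical.choose_spec (nextRow ih.1 (fun i => (ih.2 i).1))).2⟩) j
  have hNS : ∀ j i, ((R j).1 i, (R (j + 1)).1 i) ∈ N ∧ ((R (j + 1)).1 i, (R j).1 i) ∈ S :=
    fun j i =>
      (Classical.choose_spec (nextRow (R j).1 (fun i => ((R j).2 i).1))).1 i
  refine ⟨fun p => (R p.2).1 p.1, rfl, ?_, ?_, ?_, ?_⟩
  · exact fun i j => ((R j).2 i).1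
  · exact fun i j => ((R j).2 i).2
  · exact fun i j => (hNS j i).1
  · exact fun i j => (hNS j i).2
end
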